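/- Fix n ≥ 1, t₀ ∈ ℕ, a real n×n matrix H, an initial matrix A₀ with spectral norm ‖A₀‖ < 1, and a noise sequence s : ℕ → ℝⁿ with ‖s_t‖ ≤ s_max for all t ≥ t₀; set b_max := s_max / (1 − ‖A₀‖). For each α > 0, let (Aᵅ_t), (bᵅ_t) be the exact dynamics with Aᵅ_{t₀} = A₀, bᵅ_{t₀} = 0, bᵅ_{t+1} = Aᵅ_t bᵅ_t − s_t, Aᵅ_{t+1} = Aᵅ_t − α H bᵅ_{t+1} (bᵅ_t)ᵀ H², and let (A'ᵅ_t), (b'_t) be the approximate dynamics with A'ᵅ_{t₀} = A₀, b'_{t₀} = 0, b'_{t+1} = A₀ b'_t − s_t, A'ᵅ_{t+1} = A'ᵅ_t − α H b'_{t+1} (b'_t)ᵀ H². Then the learning-rate-rescaled approximation error vanishes in the iterated limit: for every δ > 0 there exists r₀ > 0 such that for every r ∈ (0, r₀) there exists α₀ > 0 such that for every α ∈ (0, α₀), ‖Aᵅ_{t₀+⌊r/α⌋} − A'ᵅ_{t₀+⌊r/α⌋}‖ ≤ δ r. -/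

import Mathlib

/-!
Put `θ = (1 + ‖A₀‖) / 2`, `B = s_max / (1 - θ)` and `C = ‖H‖³ B²`, and measure time by
`τ = α k ≤ r`. As long as `A_t` stays within `θ - ‖A₀‖` of `A₀` it is a `θ`-contraction, so `b_t`
(like the frozen `b'_t`) stays below `B`; then every learning step moves `A_t` by at most `α C`, so
the drift is at most `τ C`, which is self-consistent for small `r`. The two `b`-recursions differ by
the forcing `(A_t - A₀) b'_t = O(τ)`, damped by `θ`, so `b_t - b'_t = O(τ)`; every step of
`A - A'` is then `O(α τ)`, and summing `k` of them gives `‖A_k - A'_k‖ = O(τ²) = O(r²) = o(r)`.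
-/

open Matrix

/-- The spectral norm (ℓ²-operator norm) of a real square matrix. -/
noncomputable def specNorm {n : ℕ} (A : Matrix (Fin n) (Fin n) ℝ) : ℝ :=
  ‖Matrix.toEuclideanCLM (𝕜 := ℝ) A‖

/-- The Euclidean norm of a real vector. -/
noncomputable def evNorm {n : ℕ} (v : Fin n → ℝ) : ℝ :=
  Real.sqrt (∑ i, v i ^ 2)

open scoped Matrix.Norms.L2Operator

theorem le_of_forall_succ_le_mul_add {x : ℕ → ℝ} {θ c M : ℝ} {k : ℕ} (hθ : 0 ≤ θ)
    (hM : θ * M + c ≤ M) (h0 : x 0 ≤ M)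
    (hstep : ∀ j < k, (∀ i ≤ j, x i ≤ M) → x (j + 1) ≤ θ * x j + c) :
    ∀ j ≤ k, x j ≤ M := by
  intro j
  induction j using Nat.strong_induction_on with
  | _ j ih =>
    rcases j with _ | j
    · exact fun _ => h0
    · intro hj
      have hprev : ∀ i ≤ j, x i ≤ M := fun i hi => ih i (by omega) (by omega)
      calc x (j + 1) ≤ θ * x j + c := hstep j (by omega) hprev
        _ ≤ θ * M + c := by gcongr; exact hprev j le_rfl
        _ ≤ M := hM

theorem norm_sub_le_mul_of_norm_succ_sub_le {E : Type*} [SeminormedAddCommGroup E] {f : ℕ → E}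
    {c : ℝ} {k : ℕ} (h : ∀ j < k, ‖f (j + 1) - f j‖ ≤ c) : ‖f k - f 0‖ ≤ k * c := by
  have := dist_le_range_sum_of_dist_le (f := f) k (d := fun _ => c) fun hj => by
    rw [dist_comm, dist_eq_norm]; exact h _ hj
  simpa [dist_comm, dist_eq_norm] using this

theorem norm_mul_mul_sq_le {R : Type*} [NormedRing R] (H X : R) :
    ‖H * X * H ^ 2‖ ≤ ‖H‖ ^ 3 * ‖X‖ :=
  calc ‖H * X * H ^ 2‖ ≤ ‖H‖ * ‖X‖ * (‖H‖ * ‖H‖) := by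
        rw [sq]
        refine (norm_mul_le _ _).trans ?_
        gcongr <;> exact norm_mul_le _ _
    _ = ‖H‖ ^ 3 * ‖X‖ := by ring

section EuclideanNorm

variable {n : ℕ}

theorem specNorm_eq_norm (A : Matrix (Fin n) (Fin n) ℝ) : specNorm A = ‖A‖ := rfl

theorem evNorm_eq_norm (v : Fin n → ℝ) : evNorm v = ‖WithLp.toLp 2 v‖ := by
  simp [evNorm, EuclideanSpace.norm_eq]

theorem evNorm_nonneg (v : Fin n → ℝ) : 0 ≤ evNorm v := Real.sqrt_nonneg _

theorem evNorm_zero : evNorm (0 : Fin n → ℝ) = 0 := by simp [evNorm]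

theorem evNorm_add_le (v w : Fin n → ℝ) : evNorm (v + w) ≤ evNorm v + evNorm w := by
  simpa only [evNorm_eq_norm, WithLp.toLp_add] using norm_add_le _ _

theorem evNorm_sub_le (v w : Fin n → ℝ) : evNorm (v - w) ≤ evNorm v + evNorm w := by
  simpa only [evNorm_eq_norm, WithLp.toLp_sub] using norm_sub_le _ _

theorem evNorm_mulVec_le (A : Matrix (Fin n) (Fin n) ℝ) (v : Fin n → ℝ) :
    evNorm (A *ᵥ v) ≤ ‖A‖ * evNorm v := by
  simpa [evNorm_eq_norm] using A.l2_opNorm_mulVec (WithLp.toLp 2 v)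

theorem norm_vecMulVec (u v : Fin n → ℝ) : ‖vecMulVec u v‖ = evNorm u * evNorm v := by
  have h := InnerProductSpace.symm_toEuclideanLin_rankOne (𝕜 := ℝ) (WithLp.toLp 2 u)
    (WithLp.toLp 2 v)
  simp only [star_trivial] at h
  rw [evNorm_eq_norm, evNorm_eq_norm, ← InnerProductSpace.norm_rankOne (𝕜 := ℝ), ← h,
    l2_opNorm_def]
  simp only [LinearEquiv.trans_apply, LinearEquiv.apply_symm_apply]
  rw [(LinearMap.toContinuousLinearMap_eq_iff_eq_toLinearMap _ _).2 rfl]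

theorem norm_mul_vecMulVec_mul_sq_le (H : Matrix (Fin n) (Fin n) ℝ) (u v : Fin n → ℝ) :
    ‖H * vecMulVec u v * H ^ 2‖ ≤ ‖H‖ ^ 3 * (evNorm u * evNorm v) :=
  norm_vecMulVec u v ▸ norm_mul_mul_sq_le H _

end EuclideanNorm

/-- `M = a` gives the exact dynamics, `M = fun _ => A₀` the frozen one. -/
structure IsLodoTrajectory {n : ℕ} (A₀ H : Matrix (Fin n) (Fin n) ℝ) (α : ℝ)
    (σ : ℕ → Fin n → ℝ) (M a : ℕ → Matrix (Fin n) (Fin n) ℝ) (u : ℕ → Fin n → ℝ) : Prop where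
  mat_zero : a 0 = A₀
  vec_zero : u 0 = 0
  vec_succ : ∀ j, u (j + 1) = M j *ᵥ u j - σ j
  mat_succ : ∀ j, a (j + 1) = a j - α • (H * vecMulVec (u (j + 1)) (u j) * H ^ 2)

namespace IsLodoTrajectory

variable {n : ℕ} {A₀ H : Matrix (Fin n) (Fin n) ℝ} {α : ℝ} {σ : ℕ → Fin n → ℝ}
  {M a a' : ℕ → Matrix (Fin n) (Fin n) ℝ} {u v : ℕ → Fin n → ℝ} {θ smax B : ℝ} {k : ℕ}

theorem evNorm_le (h : IsLodoTrajectory A₀ H α σ M a u) (hθ : 0 ≤ θ) (hB₀ : 0 ≤ B)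
    (hB : θ * B + smax ≤ B) (hσ : ∀ j, evNorm (σ j) ≤ smax)
    (hM : ∀ j < k, (∀ i ≤ j, evNorm (u i) ≤ B) → ‖M j‖ ≤ θ) :
    ∀ j ≤ k, evNorm (u j) ≤ B :=
  le_of_forall_succ_le_mul_add hθ hB (by rwa [h.vec_zero, evNorm_zero]) fun j hj hu => by
    rw [h.vec_succ]
    calc evNorm (M j *ᵥ u j - σ j) ≤ ‖M j‖ * evNorm (u j) + smax :=
          (evNorm_sub_le _ _).trans (add_le_add (evNorm_mulVec_le _ _) (hσ j))
      _ ≤ θ * evNorm (u j) + smax := by gcongr; exacts [evNorm_nonneg _, hM j hj hu]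

theorem norm_sub_init_le (h : IsLodoTrajectory A₀ H α σ M a u) (hα : 0 ≤ α) {j : ℕ}
    (hu : ∀ i ≤ j, evNorm (u i) ≤ B) : ‖a j - A₀‖ ≤ α * j * (‖H‖ ^ 3 * (B * B)) := by
  have hB₀ : 0 ≤ B := (evNorm_nonneg _).trans (hu 0 (Nat.zero_le _))
  rw [← h.mat_zero, mul_comm α, mul_assoc]
  refine norm_sub_le_mul_of_norm_succ_sub_le fun i hi => ?_
  rw [h.mat_succ, sub_sub_cancel_left, norm_neg, norm_smul, Real.norm_of_nonneg hα]
  gcongr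
  refine (norm_mul_vecMulVec_mul_sq_le H _ _).trans ?_
  exact mul_le_mul_of_nonneg_left (mul_le_mul (hu _ hi) (hu _ hi.le) (evNorm_nonneg _) hB₀)
    (by positivity)

theorem evNorm_le_of_exact (h : IsLodoTrajectory A₀ H α σ a a u) (hα : 0 ≤ α) (hθ : 0 ≤ θ)
    (hB₀ : 0 ≤ B) (hB : θ * B + smax ≤ B) (hσ : ∀ j, evNorm (σ j) ≤ smax)
    (hτ : α * k * (‖H‖ ^ 3 * (B * B)) ≤ θ - ‖A₀‖) : ∀ j ≤ k, evNorm (u j) ≤ B :=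
  h.evNorm_le hθ hB₀ hB hσ fun j hj hu => by
    have hdrift : α * j * (‖H‖ ^ 3 * (B * B)) ≤ α * k * (‖H‖ ^ 3 * (B * B)) := by gcongr
    linarith [norm_le_norm_add_norm_sub' (a j) A₀, h.norm_sub_init_le hα hu]

theorem evNorm_sub_le_of_frozen (h : IsLodoTrajectory A₀ H α σ a a u)
    (h' : IsLodoTrajectory A₀ H α σ (fun _ => A₀) a' v) {D E : ℝ} (hθ : 0 ≤ θ) (hE₀ : 0 ≤ E)
    (hE : θ * E + D * B ≤ E) (ha : ∀ j < k, ‖a j‖ ≤ θ) (hD : ∀ j < k, ‖a j - A₀‖ ≤ D)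
    (hv : ∀ j < k, evNorm (v j) ≤ B) : ∀ j ≤ k, evNorm (u j - v j) ≤ E := by
  refine le_of_forall_succ_le_mul_add hθ hE (by rwa [h.vec_zero, h'.vec_zero, sub_zero,
    evNorm_zero]) fun j hj _ => ?_
  have hdiff : u (j + 1) - v (j + 1) = a j *ᵥ (u j - v j) + (a j - A₀) *ᵥ v j := by
    rw [h.vec_succ, h'.vec_succ, mulVec_sub, sub_mulVec]
    abel
  rw [hdiff]
  calc evNorm (a j *ᵥ (u j - v j) + (a j - A₀) *ᵥ v j)
        ≤ ‖a j‖ * evNorm (u j - v j) + ‖a j - A₀‖ * evNorm (v j) :=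
        (evNorm_add_le _ _).trans (add_le_add (evNorm_mulVec_le _ _) (evNorm_mulVec_le _ _))
    _ ≤ θ * evNorm (u j - v j) + D * B :=
        add_le_add (mul_le_mul_of_nonneg_right (ha j hj) (evNorm_nonneg _))
          (mul_le_mul (hD j hj) (hv j hj) (evNorm_nonneg _) ((norm_nonneg _).trans (hD j hj)))

theorem norm_sub_le_of_evNorm_sub_le {σ' : ℕ → Fin n → ℝ} {M' : ℕ → Matrix (Fin n) (Fin n) ℝ}
    (h : IsLodoTrajectory A₀ H α σ M a u) (h' : IsLodoTrajectory A₀ H α σ' M' a' v) (hα : 0 ≤ α)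
    {E : ℝ} (hu : ∀ j ≤ k, evNorm (u j) ≤ B) (hv : ∀ j ≤ k, evNorm (v j) ≤ B)
    (huv : ∀ j ≤ k, evNorm (u j - v j) ≤ E) :
    ‖a k - a' k‖ ≤ α * k * (‖H‖ ^ 3 * (2 * B * E)) := by
  have := norm_sub_le_mul_of_norm_succ_sub_le (f := fun j => a j - a' j) (k := k)
    (c := α * (‖H‖ ^ 3 * (2 * B * E))) fun j hj => by
      have hsplit : vecMulVec (u (j + 1)) (u j) - vecMulVec (v (j + 1)) (v j)
          = vecMulVec (u (j + 1) - v (j + 1)) (u j) + vecMulVec (v (j + 1)) (u j - v j) := by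
        rw [sub_vecMulVec, vecMulVec_sub]
        abel
      have hstep : a (j + 1) - a' (j + 1) - (a j - a' j)
          = -(α • (H * (vecMulVec (u (j + 1)) (u j) - vecMulVec (v (j + 1)) (v j)) * H ^ 2)) := by
        rw [h.mat_succ, h'.mat_succ, mul_sub, sub_mul, smul_sub]
        abel
      rw [hstep, norm_neg, norm_smul, Real.norm_of_nonneg hα, hsplit]
      gcongr
      refine (norm_mul_mul_sq_le H _).trans (mul_le_mul_of_nonneg_left ?_ (by positivity))
      refine (norm_add_le _ _).trans ?_
      rw [norm_vecMulVec, norm_vecMulVec]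
      have := mul_le_mul (huv _ hj) (hu _ hj.le) (evNorm_nonneg _)
        ((evNorm_nonneg _).trans (huv _ hj))
      have := mul_le_mul (hv _ hj) (huv _ hj.le) (evNorm_nonneg _)
        ((evNorm_nonneg _).trans (hv _ hj))
      linarith
  simpa [h.mat_zero, h'.mat_zero, mul_comm α, mul_assoc] using this

theorem norm_exact_sub_frozen_le (h : IsLodoTrajectory A₀ H α σ a a u)
    (h' : IsLodoTrajectory A₀ H α σ (fun _ => A₀) a' v) (hα : 0 ≤ α) (hθ₁ : θ < 1)
    (hB₀ : 0 ≤ B) (hB : θ * B + smax ≤ B) (hσ : ∀ j, evNorm (σ j) ≤ smax)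
    (hτ : α * k * (‖H‖ ^ 3 * (B * B)) ≤ θ - ‖A₀‖) :
    ‖a k - a' k‖ ≤ 2 * (α * k * (‖H‖ ^ 3 * (B * B))) ^ 2 / (1 - θ) := by
  set D := α * k * (‖H‖ ^ 3 * (B * B))
  have hD₀ : 0 ≤ D := by positivity
  have hθ₀ : 0 ≤ θ := by linarith [norm_nonneg A₀]
  have hθ₁' : 0 < 1 - θ := by linarith
  have hu := h.evNorm_le_of_exact hα hθ₀ hB₀ hB hσ hτ
  have hdrift (j : ℕ) (hj : j ≤ k) : ‖a j - A₀‖ ≤ D :=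
    (h.norm_sub_init_le hα fun i hi => hu i (hi.trans hj)).trans (by simp only [D]; gcongr)
  have hv := h'.evNorm_le (k := k) hθ₀ hB₀ hB hσ fun _ _ _ => by linarith
  have huv := h.evNorm_sub_le_of_frozen h' (E := D * B / (1 - θ)) hθ₀ (by positivity)
    (le_of_eq (by field_simp; ring))
    (fun j hj => by linarith [norm_le_norm_add_norm_sub' (a j) A₀, hdrift j hj.le])
    (fun j hj => hdrift j hj.le) (fun j hj => hv j hj.le)
  calc ‖a k - a' k‖ ≤ α * k * (‖H‖ ^ 3 * (2 * B * (D * B / (1 - θ)))) :=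
        h.norm_sub_le_of_evNorm_sub_le h' hα hu hv huv
    _ = 2 * D ^ 2 / (1 - θ) := by ring

end IsLodoTrajectory

theorem exists_pos_forall_mul_le_and_sq_div_le {C κ δ : ℝ} (hC : 0 ≤ C) (hκ : 0 < κ)
    (hδ : 0 < δ) : ∃ r₀ > 0, ∀ r, 0 < r → r < r₀ → r * C ≤ κ ∧ 2 * (r * C) ^ 2 / κ ≤ δ * r := by
  refine ⟨min (κ / (C + 1)) (δ * κ / (2 * (C + 1) ^ 2)), by positivity, fun r hr hr₀ => ?_⟩
  have h₁ : r * (C + 1) < κ := (lt_div_iff₀ (by positivity)).1 (hr₀.trans_le (min_le_left _ _))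
  have h₂ : r * (2 * (C + 1) ^ 2) < δ * κ :=
    (lt_div_iff₀ (by positivity)).1 (hr₀.trans_le (min_le_right _ _))
  refine ⟨by nlinarith, ?_⟩
  rw [div_le_iff₀ hκ]
  nlinarith [mul_le_mul_of_nonneg_left (by nlinarith : C ^ 2 ≤ (C + 1) ^ 2) hr.le]

theorem lodo_approximation_error_vanishes_general (n : ℕ) (t₀ : ℕ)
    (H : Matrix (Fin n) (Fin n) ℝ)
    (A₀ : Matrix (Fin n) (Fin n) ℝ) (hA₀ : specNorm A₀ < 1)
    (smax : ℝ) (s : ℕ → (Fin n → ℝ)) (hs : ∀ t, t₀ ≤ t → evNorm (s t) ≤ smax)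
    (A A' : ℝ → ℕ → Matrix (Fin n) (Fin n) ℝ)
    (b : ℝ → ℕ → (Fin n → ℝ)) (b' : ℕ → (Fin n → ℝ))
    (hA0 : ∀ α : ℝ, 0 < α → A α t₀ = A₀)
    (hb0 : ∀ α : ℝ, 0 < α → b α t₀ = 0)
    (hbrec : ∀ α : ℝ, 0 < α → ∀ t, t₀ ≤ t → b α (t + 1) = A α t *ᵥ b α t - s t)
    (hArec : ∀ α : ℝ, 0 < α → ∀ t, t₀ ≤ t →
      A α (t + 1) = A α t - α • (H * vecMulVec (b α (t + 1)) (b α t) * H ^ 2))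
    (hA'0 : ∀ α : ℝ, 0 < α → A' α t₀ = A₀)
    (hb'0 : b' t₀ = 0)
    (hb'rec : ∀ t, t₀ ≤ t → b' (t + 1) = A₀ *ᵥ b' t - s t)
    (hA'rec : ∀ α : ℝ, 0 < α → ∀ t, t₀ ≤ t →
      A' α (t + 1) = A' α t - α • (H * vecMulVec (b' (t + 1)) (b' t) * H ^ 2)) :
    ∀ δ : ℝ, 0 < δ → ∃ r₀ : ℝ, 0 < r₀ ∧ ∀ r : ℝ, 0 < r → r < r₀ →
      ∃ α₀ : ℝ, 0 < α₀ ∧ ∀ α : ℝ, 0 < α → α < α₀ →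
        specNorm (A α (t₀ + ⌊r / α⌋₊) - A' α (t₀ + ⌊r / α⌋₊)) ≤ δ * r := by
  intro δ hδ
  rw [specNorm_eq_norm] at hA₀
  set θ := (1 + ‖A₀‖) / 2 with hθ
  have hθ₁ : 0 < 1 - θ := by linarith
  set B := smax / (1 - θ)
  have hB₀ : 0 ≤ B := div_nonneg ((evNorm_nonneg _).trans (hs t₀ le_rfl)) hθ₁.le
  have hB : θ * B + smax ≤ B := le_of_eq (by simp only [B]; field_simp; ring)
  set C := ‖H‖ ^ 3 * (B * B)
  have hC₀ : 0 ≤ C := by positivity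
  obtain ⟨r₀, hr₀, hsmall⟩ := exists_pos_forall_mul_le_and_sq_div_le hC₀ hθ₁ hδ
  refine ⟨r₀, hr₀, fun r hr hrr₀ => ⟨1, one_pos, fun α hα _ => ?_⟩⟩
  obtain ⟨hrC, hrδ⟩ := hsmall r hr hrr₀
  have hτ : α * ⌊r / α⌋₊ ≤ r := by
    rw [mul_comm, ← le_div_iff₀ hα]; exact Nat.floor_le (by positivity)
  have hexact : IsLodoTrajectory A₀ H α (fun j => s (t₀ + j)) (fun j => A α (t₀ + j))
      (fun j => A α (t₀ + j)) (fun j => b α (t₀ + j)) :=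
    ⟨hA0 α hα, hb0 α hα, fun _ => hbrec α hα _ (Nat.le_add_right _ _),
      fun _ => hArec α hα _ (Nat.le_add_right _ _)⟩
  have hfrozen : IsLodoTrajectory A₀ H α (fun j => s (t₀ + j)) (fun _ => A₀)
      (fun j => A' α (t₀ + j)) (fun j => b' (t₀ + j)) :=
    ⟨hA'0 α hα, hb'0, fun _ => hb'rec _ (Nat.le_add_right _ _),
      fun _ => hA'rec α hα _ (Nat.le_add_right _ _)⟩
  have key := hexact.norm_exact_sub_frozen_le hfrozen hα.le (by linarith) hB₀ hB
    (fun _ => hs _ (Nat.le_add_right _ _)) (by linarith [mul_le_mul_of_nonneg_right hτ hC₀])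
  calc specNorm (A α (t₀ + ⌊r / α⌋₊) - A' α (t₀ + ⌊r / α⌋₊))
      ≤ 2 * (α * ⌊r / α⌋₊ * C) ^ 2 / (1 - θ) := key
    _ ≤ 2 * (r * C) ^ 2 / (1 - θ) := by gcongr
    _ ≤ δ * r := hrδ

/-- The learning-rate-rescaled approximation error of the frozen-`A`
dynamics vanishes in the iterated limit:
`lim_{r→0} lim_{α→0} (1/r) ‖A^α_{t₀+⌊r/α⌋} − A'^α_{t₀+⌊r/α⌋}‖ = 0`. -/
theorem lodo_approximation_error_vanishes (n : ℕ) (hn : 1 ≤ n) (t₀ : ℕ)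
    (H : Matrix (Fin n) (Fin n) ℝ)
    (A₀ : Matrix (Fin n) (Fin n) ℝ) (hA₀ : specNorm A₀ < 1)
    (smax : ℝ) (s : ℕ → (Fin n → ℝ)) (hs : ∀ t, t₀ ≤ t → evNorm (s t) ≤ smax)
    (A A' : ℝ → ℕ → Matrix (Fin n) (Fin n) ℝ)
    (b : ℝ → ℕ → (Fin n → ℝ)) (b' : ℕ → (Fin n → ℝ))
    (hA0 : ∀ α : ℝ, 0 < α → A α t₀ = A₀)
    (hb0 : ∀ α : ℝ, 0 < α → b α t₀ = 0)
    (hbrec : ∀ α : ℝ, 0 < α → ∀ t, t₀ ≤ t → b α (t + 1) = A α t *ᵥ b α t - s t)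
    (hArec : ∀ α : ℝ, 0 < α → ∀ t, t₀ ≤ t →
      A α (t + 1) = A α t - α • (H * vecMulVec (b α (t + 1)) (b α t) * H ^ 2))
    (hA'0 : ∀ α : ℝ, 0 < α → A' α t₀ = A₀)
    (hb'0 : b' t₀ = 0)
    (hb'rec : ∀ t, t₀ ≤ t → b' (t + 1) = A₀ *ᵥ b' t - s t)
    (hA'rec : ∀ α : ℝ, 0 < α → ∀ t, t₀ ≤ t →
      A' α (t + 1) = A' α t - α • (H * vecMulVec (b' (t + 1)) (b' t) * H ^ 2)) :
    ∀ δ : ℝ, 0 < δ → ∃ r₀ : ℝ, 0 < r₀ ∧ ∀ r : ℝ, 0 < r → r < r₀ →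
      ∃ α₀ : ℝ, 0 < α₀ ∧ ∀ α : ℝ, 0 < α → α < α₀ →
        specNorm (A α (t₀ + ⌊r / α⌋₊) - A' α (t₀ + ⌊r / α⌋₊)) ≤ δ * r :=
  lodo_approximation_error_vanishes_general n t₀ H A₀ hA₀ smax s hs A A' b b' hA0 hb0 hbrec hArec
    hA'0 hb'0 hb'rec hA'rec
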